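/- arXiv:2406.06942 — 4 statements merged into one kernel-verified Lean document; each statement's English description precedes it below -/
import Mathlib

section
/- Let P ∈ ℝ^{n×n} be invertible. If for all vectors y, z ∈ ℝⁿ the identity P⁻¹(diag(Py))Pz = diag(y)z holds (i.e., the ⋆_P tubal product equals the Hadamard product), then P is a permutation matrix. -/
open Matrix

/-- A permutation matrix: the matrix of some permutation. -/
def IsPermMatrix {n : ℕ} (P : Matrix (Fin n) (Fin n) ℝ) : Prop :=
  ∃ σ : Equiv.Perm (Fin n), P = σ.permMatrix ℝ

/-!
The hypothesis says `diag(P y) P = P diag(y)`. Taking `y = e_k` shows that every row `v` of `P`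
satisfies `v_k • v = v_k e_k` for all `k`. Without zero divisors this forces each nonzero row to
be a standard basis vector `e_{σ i}`; invertibility of `P` rules out zero rows and makes `σ`
injective.
-/

theorem Pi.exists_eq_single_one_of_smul_eq_single {ι M₀ : Type*} [DecidableEq ι]
    [MonoidWithZero M₀] [IsLeftCancelMulZero M₀] {v : ι → M₀} (hv : v ≠ 0)
    (h : ∀ k, v k • v = Pi.single k (v k)) :
    ∃ j, v = Pi.single j 1 := by
  obtain ⟨j, hj⟩ := Function.ne_iff.mp hv
  have hvj := congrFun (h j)
  refine ⟨j, funext fun l => ?_⟩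
  rcases eq_or_ne l j with rfl | hl
  · have hsq : v l * v l = v l * 1 := by simpa using hvj l
    simpa using mul_left_cancel₀ hj hsq
  · have hprod : v j * v l = 0 := by simpa [hl] using hvj l
    simpa [hl] using (mul_eq_zero.mp hprod).resolve_left hj

namespace Matrix

variable {ι R : Type*} [Fintype ι] [DecidableEq ι]

theorem row_smul_eq_single_of_diagonal_mulVec_mul_eq [Semiring R] {P : Matrix ι ι R}
    (h : ∀ y, diagonal (P *ᵥ y) * P = P * diagonal y) (i k : ι) :
    P i k • P i = Pi.single k (P i k) := by
  funext j
  have := congrFun₂ (h (Pi.single k 1)) i j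
  by_cases hjk : j = k
  · subst hjk
    simpa [diagonal_mul, mul_diagonal] using this
  · simpa [diagonal_mul, mul_diagonal, hjk] using this

theorem exists_eq_permMatrix_of_row_eq_single [CommRing R] {P : Matrix ι ι R} (hP : P.det ≠ 0)
    (σ : ι → ι) (hrow : ∀ i, P i = Pi.single (σ i) 1) : ∃ e : Equiv.Perm ι, P = e.permMatrix R := by
  have hσ : Function.Injective σ := fun i i' hii' => by
    by_contra hne
    exact hP (det_zero_of_row_eq hne (by rw [hrow, hrow, hii']))
  refine ⟨Equiv.ofBijective σ (Finite.injective_iff_bijective.mp hσ), ?_⟩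
  ext i j
  simp [hrow, PEquiv.toMatrix_apply, Pi.single_apply, eq_comm]

end Matrix

/-- If the `⋆_P` tubal product coincides with the Hadamard product, i.e.
`P⁻¹ diag(Py) P z = diag(y) z` for all `y, z`, then `P` is a permutation matrix. -/
theorem isPermMatrix_of_star_eq_hadamard {n : ℕ} (P : Matrix (Fin n) (Fin n) ℝ)
    (hP : IsUnit P)
    (h : ∀ y z : Fin n → ℝ, (P⁻¹ * Matrix.diagonal (P *ᵥ y) * P) *ᵥ z = Matrix.diagonal y *ᵥ z) :
    IsPermMatrix P := by
  have hdet : IsUnit P.det := (isUnit_iff_isUnit_det P).mp hP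
  have hcomm : ∀ y, diagonal (P *ᵥ y) * P = P * diagonal y := fun y => by
    rw [← mulVec_injective (funext (h y)), mul_assoc, mul_nonsing_inv_cancel_left _ _ hdet]
  have hrow : ∀ i, ∃ j, P i = Pi.single j 1 := fun i =>
    Pi.exists_eq_single_one_of_smul_eq_single
      (fun h0 => hdet.ne_zero (det_eq_zero_of_row_eq_zero i (congrFun h0)))
      (row_smul_eq_single_of_diagonal_mulVec_mul_eq hcomm i)
  choose σ hσ using hrow
  exact exists_eq_permMatrix_of_row_eq_single hdet.ne_zero σ hσ
end

section
/- Let M be an invertible n₃×n₃ real matrix and P an n₃×n₃ permutation matrix. Then for all tubes a, b ∈ ℝ^{n₃}, a ⋆_{PM} b = a ⋆_M b. -/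
/-!
A permutation matrix `P` commutes with the Hadamard product, `P(x ⊙ y) = Px ⊙ Py`, so
`(PM)⁻¹(PMa ⊙ PMb) = M⁻¹P⁻¹P(Ma ⊙ Mb) = M⁻¹(Ma ⊙ Mb)`.
-/

open Matrix

/-- The `⋆_M` tubal product: `a ⋆_M b = M⁻¹((Ma) ⊙ (Mb))`. -/
noncomputable def starM {n : ℕ} (M : Matrix (Fin n) (Fin n) ℝ) (a b : Fin n → ℝ) : Fin n → ℝ :=
  M⁻¹ *ᵥ ((M *ᵥ a) * (M *ᵥ b))

namespace Matrix

variable {ι R : Type*} [Fintype ι] [DecidableEq ι] [CommRing R]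

theorem isUnit_det_permMatrix (σ : Equiv.Perm ι) : IsUnit (σ.permMatrix R).det := by
  rw [det_permutation]
  exact (Equiv.Perm.sign σ).isUnit.map (Int.castRingHom R)

theorem permMatrix_mulVec_mul (σ : Equiv.Perm ι) (x y : ι → R) :
    σ.permMatrix R *ᵥ (x * y) = (σ.permMatrix R *ᵥ x) * (σ.permMatrix R *ᵥ y) := by
  simp only [permMatrix_mulVec]
  rfl

end Matrix

theorem starM_mul_of_mulVec_mul {n : ℕ} (M P : Matrix (Fin n) (Fin n) ℝ) (hP : IsUnit P.det)
    (hmul : ∀ x y, P *ᵥ (x * y) = (P *ᵥ x) * (P *ᵥ y)) (a b : Fin n → ℝ) :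
    starM (P * M) a b = starM M a b := by
  rw [starM, starM, Matrix.mul_inv_rev, ← mulVec_mulVec, ← mulVec_mulVec, ← mulVec_mulVec, ← hmul,
    mulVec_mulVec _ P⁻¹, nonsing_inv_mul P hP, one_mulVec]

theorem starM_perm_mul_general {n : ℕ} (M P : Matrix (Fin n) (Fin n) ℝ)
    (hP : IsPermMatrix P) (a b : Fin n → ℝ) :
    starM (P * M) a b = starM M a b := by
  obtain ⟨σ, rfl⟩ := hP
  exact starM_mul_of_mulVec_mul M _ (isUnit_det_permMatrix σ) (permMatrix_mulVec_mul σ) a b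

theorem starM_perm_mul {n : ℕ} (M P : Matrix (Fin n) (Fin n) ℝ)
    (hM : IsUnit M) (hP : IsPermMatrix P) (a b : Fin n → ℝ) :
    starM (P * M) a b = starM M a b :=
  starM_perm_mul_general M P hP a b
end

section
/- Let A and B be third-order tensors of sizes n₁×p×n₃ and p×n₂×n₃ respectively, and let M be an n₃×n₃ orthogonal matrix. Define Â by applying M along the third mode (Â_{i,j,:} = M A_{i,j,:}) and the facewise product (Â △ B̂)_{:,:,k} = Â_{:,:,k} B̂_{:,:,k}. Then the ⋆_M-product A ⋆_M B := (Â △ B̂) ×₃ Mᵀ satisfies ‖A ⋆_M B‖_F ≤ ‖A‖_F ‖B‖_F. -/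
open Matrix

/-- Mode-3 product: apply `M` along each mode-3 fiber (tube). -/
def mode3 {n₁ n₂ n₃ q : ℕ} (M : Matrix (Fin q) (Fin n₃) ℝ)
    (A : Fin n₁ → Fin n₂ → Fin n₃ → ℝ) : Fin n₁ → Fin n₂ → Fin q → ℝ :=
  fun i j k => ∑ l, M k l * A i j l

/-- Facewise product: multiply corresponding frontal slices. -/
def facewise {n₁ p n₂ n₃ : ℕ} (A : Fin n₁ → Fin p → Fin n₃ → ℝ)
    (B : Fin p → Fin n₂ → Fin n₃ → ℝ) : Fin n₁ → Fin n₂ → Fin n₃ → ℝ :=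
  fun i j k => ∑ t, A i t k * B t j k

/-- Tensor Frobenius norm. -/
noncomputable def fnorm {n₁ n₂ n₃ : ℕ} (A : Fin n₁ → Fin n₂ → Fin n₃ → ℝ) : ℝ :=
  Real.sqrt (∑ i, ∑ j, ∑ k, (A i j k) ^ 2)

/-- The `⋆_M`-product for orthogonal `M`: `A ⋆_M B = (Â △ B̂) ×₃ Mᵀ`. -/
def tstar {n₁ p n₂ n₃ : ℕ} (M : Matrix (Fin n₃) (Fin n₃) ℝ)
    (A : Fin n₁ → Fin p → Fin n₃ → ℝ) (B : Fin p → Fin n₂ → Fin n₃ → ℝ) :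
    Fin n₁ → Fin n₂ → Fin n₃ → ℝ :=
  mode3 Mᵀ (facewise (mode3 M A) (mode3 M B))


/-!
Multiplying each tube by an orthogonal matrix preserves the Frobenius norm, so
`‖A ⋆_M B‖_F = ‖Â △ B̂‖_F`, `‖Â‖_F = ‖A‖_F` and `‖B̂‖_F = ‖B‖_F`. The facewise product is
submultiplicative: on each frontal slice Cauchy–Schwarz gives `‖Â_k B̂_k‖² ≤ ‖Â_k‖² ‖B̂_k‖²`, and
summing over `k`, `∑ₖ aₖ bₖ ≤ (∑ₖ aₖ)(∑ₖ bₖ)` for nonnegative `aₖ, bₖ`.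
-/

open Finset

lemma sum_sq_mulVec_of_transpose_mul_self {m n R : Type*} [Fintype m] [Fintype n]
    [DecidableEq n] [CommSemiring R] (M : Matrix m n R) (hM : Mᵀ * M = 1) (v : n → R) :
    ∑ k, (M *ᵥ v) k ^ 2 = ∑ l, v l ^ 2 := by
  have h : M *ᵥ v ⬝ᵥ M *ᵥ v = v ⬝ᵥ v := by
    rw [dotProduct_mulVec, ← mulVec_transpose, mulVec_mulVec, hM, one_mulVec]
  simpa only [dotProduct, sq] using h

lemma sum_mul_le_sum_mul_sum_of_nonneg {ι R : Type*} [Semiring R] [PartialOrder R]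
    [IsOrderedRing R] (s : Finset ι) {x y : ι → R}
    (hx : ∀ i ∈ s, 0 ≤ x i) (hy : ∀ i ∈ s, 0 ≤ y i) :
    ∑ i ∈ s, x i * y i ≤ (∑ i ∈ s, x i) * ∑ i ∈ s, y i := by
  rw [sum_mul]
  exact sum_le_sum fun i hi => mul_le_mul_of_nonneg_left (single_le_sum hy hi) (hx i hi)

lemma sum_sq_matrix_mul_le {l m n R : Type*} [Fintype l] [Fintype m] [Fintype n]
    [CommSemiring R] [LinearOrder R] [IsStrictOrderedRing R] [ExistsAddOfLE R]
    (a : l → m → R) (b : m → n → R) :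
    ∑ i, ∑ j, (∑ t, a i t * b t j) ^ 2 ≤ (∑ i, ∑ t, a i t ^ 2) * ∑ t, ∑ j, b t j ^ 2 :=
  calc ∑ i, ∑ j, (∑ t, a i t * b t j) ^ 2
      ≤ ∑ i, ∑ j, (∑ t, a i t ^ 2) * ∑ t, b t j ^ 2 :=
        sum_le_sum fun i _ => sum_le_sum fun j _ =>
          sum_mul_sq_le_sq_mul_sq _ (a i) (fun t => b t j)
    _ = (∑ i, ∑ t, a i t ^ 2) * ∑ t, ∑ j, b t j ^ 2 := by
        rw [← sum_mul_sum]
        congr 1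
        exact sum_comm

lemma sum_sum_sum_comm_last {α β γ M : Type*} [Fintype α] [Fintype β] [Fintype γ]
    [AddCommMonoid M] (f : α → β → γ → M) : ∑ i, ∑ j, ∑ k, f i j k = ∑ k, ∑ i, ∑ j, f i j k :=
  (sum_congr rfl fun _ _ => sum_comm).trans sum_comm

lemma fnorm_mode3 {n₁ n₂ n₃ q : ℕ} (M : Matrix (Fin q) (Fin n₃) ℝ) (hM : Mᵀ * M = 1)
    (A : Fin n₁ → Fin n₂ → Fin n₃ → ℝ) : fnorm (mode3 M A) = fnorm A := by
  unfold fnorm mode3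
  congr 1
  exact sum_congr rfl fun i _ => sum_congr rfl fun j _ =>
    sum_sq_mulVec_of_transpose_mul_self M hM (A i j)

lemma sum_sq_facewise_le {n₁ p n₂ n₃ : ℕ} (A : Fin n₁ → Fin p → Fin n₃ → ℝ)
    (B : Fin p → Fin n₂ → Fin n₃ → ℝ) :
    ∑ i, ∑ j, ∑ k, facewise A B i j k ^ 2 ≤
      (∑ i, ∑ t, ∑ k, A i t k ^ 2) * ∑ t, ∑ j, ∑ k, B t j k ^ 2 := by
  rw [sum_sum_sum_comm_last (fun i j k => facewise A B i j k ^ 2),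
    sum_sum_sum_comm_last (fun i t k => A i t k ^ 2),
    sum_sum_sum_comm_last (fun t j k => B t j k ^ 2)]
  calc ∑ k, ∑ i, ∑ j, facewise A B i j k ^ 2
      ≤ ∑ k, (∑ i, ∑ t, A i t k ^ 2) * ∑ t, ∑ j, B t j k ^ 2 :=
        sum_le_sum fun k _ => sum_sq_matrix_mul_le (fun i t => A i t k) (fun t j => B t j k)
    _ ≤ (∑ k, ∑ i, ∑ t, A i t k ^ 2) * ∑ k, ∑ t, ∑ j, B t j k ^ 2 :=
        sum_mul_le_sum_mul_sum_of_nonneg _ (fun _ _ => by positivity) fun _ _ => by positivity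

lemma fnorm_facewise_le {n₁ p n₂ n₃ : ℕ} (A : Fin n₁ → Fin p → Fin n₃ → ℝ)
    (B : Fin p → Fin n₂ → Fin n₃ → ℝ) : fnorm (facewise A B) ≤ fnorm A * fnorm B := by
  unfold fnorm
  rw [← Real.sqrt_mul (by positivity)]
  exact Real.sqrt_le_sqrt (sum_sq_facewise_le A B)

theorem fnorm_tprod_le {n₁ p n₂ n₃ : ℕ} (M : Matrix (Fin n₃) (Fin n₃) ℝ)
    (hM : Mᵀ * M = 1) (A : Fin n₁ → Fin p → Fin n₃ → ℝ)
    (B : Fin p → Fin n₂ → Fin n₃ → ℝ) :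
    fnorm (tstar M A B) ≤ fnorm A * fnorm B := by
  have hMT : Mᵀᵀ * Mᵀ = 1 := by rw [transpose_transpose, mul_eq_one_comm.mp hM]
  calc fnorm (tstar M A B) = fnorm (facewise (mode3 M A) (mode3 M B)) := fnorm_mode3 Mᵀ hMT _
    _ ≤ fnorm (mode3 M A) * fnorm (mode3 M B) := fnorm_facewise_le _ _
    _ = fnorm A * fnorm B := by rw [fnorm_mode3 M hM, fnorm_mode3 M hM]
end

section
/- Consider the 2×2×2 tensor A with frontal slices A_{:,:,1} = [[1,1],[-1,1]] and A_{:,:,2} = [[1,-1],[1,1]]. For any 2×2 orthogonal matrix M, each frontal slice of = A ×₃ M is √2 times an orthogonal matrix; in particular, both singular values of each transformed frontal slice equal √2, so the ⋆_M-operator norm of A equals √2 for every orthogonal M. -/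
open Matrix

/-- Spectral norm (largest singular value) of a real matrix. -/
noncomputable def sigma1 {m n : ℕ} (Z : Matrix (Fin m) (Fin n) ℝ) : ℝ :=
  ‖LinearMap.toContinuousLinearMap (Matrix.toEuclideanLin Z)‖

/-- First frontal slice. -/
def S1 : Matrix (Fin 2) (Fin 2) ℝ := !![1, 1; -1, 1]

/-- Second frontal slice. -/
def S2 : Matrix (Fin 2) (Fin 2) ℝ := !![1, -1; 1, 1]

/-!
Writing `J = !![0, 1; -1, 0]`, the slices are `S1 = 1 + J` and `S2 = 1 - J`, so
`a • S1 + b • S2 = (a + b) • 1 + (a - b) • J` is a scaled rotation with Gram matrix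
`((a + b) ^ 2 + (a - b) ^ 2) • 1 = 2 (a ^ 2 + b ^ 2) • 1`. For a row `(a, b)` of an orthogonal
matrix `a ^ 2 + b ^ 2 = 1`, and the C⋆-identity `‖Zᵀ * Z‖ = ‖Z‖ ^ 2` of the spectral norm turns
`Zᵀ * Z = 2 • 1` into `‖Z‖ = √2`.
-/

theorem Matrix.sum_sq_row_eq_one_of_transpose_mul_self {n R : Type*} [Fintype n] [DecidableEq n]
    [CommRing R] {M : Matrix n n R} (hM : Mᵀ * M = 1) (k : n) :
    ∑ j, M k j ^ 2 = 1 := by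
  have := congrFun₂ (mul_eq_one_comm.mp hM : M * Mᵀ = 1) k k
  simpa only [mul_apply, transpose_apply, one_apply_eq, sq] using this

theorem transpose_mul_self_smul_S1_add_smul_S2 (a b : ℝ) :
    (a • S1 + b • S2)ᵀ * (a • S1 + b • S2) =
      (2 * (a ^ 2 + b ^ 2)) • (1 : Matrix (Fin 2) (Fin 2) ℝ) := by
  ext i j
  fin_cases i <;> fin_cases j <;> simp [S1, S2, mul_apply, Fin.sum_univ_two] <;> ring

theorem Matrix.exists_orthogonal_smul_of_transpose_mul_self {m n K : Type*} [Fintype m]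
    [DecidableEq n] [Field K] {Z : Matrix m n K} {c : K} (hc : c ≠ 0) (hZ : Zᵀ * Z = c ^ 2 • 1) :
    ∃ Q : Matrix m n K, Qᵀ * Q = 1 ∧ Z = c • Q :=
  ⟨c⁻¹ • Z, by
    rw [transpose_smul, Matrix.smul_mul, Matrix.mul_smul, hZ, smul_smul, smul_smul]
    field_simp
    simp,
    by rw [smul_smul, mul_inv_cancel₀ hc, one_smul]⟩

open scoped Matrix.Norms.L2Operator in
theorem sigma1_eq_of_transpose_mul_self {m n : ℕ} [NeZero n] {Z : Matrix (Fin m) (Fin n) ℝ}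
    {c : ℝ} (hc : 0 ≤ c) (hZ : Zᵀ * Z = c ^ 2 • 1) : sigma1 Z = c := by
  have hsq : ‖Z‖ * ‖Z‖ = c * c := by
    rw [← l2_opNorm_conjTranspose_mul_self, conjTranspose_eq_transpose_of_trivial, hZ, norm_smul,
      norm_one, mul_one, Real.norm_of_nonneg (sq_nonneg c), sq]
  exact (mul_self_inj (norm_nonneg Z) hc).mp hsq

/-- For every orthogonal `M`, each transformed frontal slice
`Â_k = M_{k,0} S1 + M_{k,1} S2` is `√2` times an orthogonal matrix, both of its singular
values equal `√2` (i.e. `Â_kᵀ Â_k = 2 I`), and the `⋆_M`-operator norm of `A` is `√2`. -/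
theorem bounded_operator_norm_example (M : Matrix (Fin 2) (Fin 2) ℝ) (hM : Mᵀ * M = 1) :
    (∀ k : Fin 2,
      (M k 0 • S1 + M k 1 • S2)ᵀ * (M k 0 • S1 + M k 1 • S2) =
        (2 : ℝ) • (1 : Matrix (Fin 2) (Fin 2) ℝ)) ∧
    (∀ k : Fin 2, ∃ Q : Matrix (Fin 2) (Fin 2) ℝ,
      Qᵀ * Q = 1 ∧ M k 0 • S1 + M k 1 • S2 = Real.sqrt 2 • Q) ∧
    (Finset.univ.sup' Finset.univ_nonempty
        fun k : Fin 2 => sigma1 (M k 0 • S1 + M k 1 • S2)) = Real.sqrt 2 := by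
  have hgram (k : Fin 2) : (M k 0 • S1 + M k 1 • S2)ᵀ * (M k 0 • S1 + M k 1 • S2) =
      (2 : ℝ) • (1 : Matrix (Fin 2) (Fin 2) ℝ) := by
    have hrow := M.sum_sq_row_eq_one_of_transpose_mul_self hM k
    rw [Fin.sum_univ_two] at hrow
    rw [transpose_mul_self_smul_S1_add_smul_S2, hrow, mul_one]
  have hgram' (k : Fin 2) : (M k 0 • S1 + M k 1 • S2)ᵀ * (M k 0 • S1 + M k 1 • S2) =
      Real.sqrt 2 ^ 2 • (1 : Matrix (Fin 2) (Fin 2) ℝ) := by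
    rw [hgram, Real.sq_sqrt zero_le_two]
  refine ⟨hgram, fun k ↦ exists_orthogonal_smul_of_transpose_mul_self (by positivity) (hgram' k),
    ?_⟩
  simp only [sigma1_eq_of_transpose_mul_self (Real.sqrt_nonneg 2) (hgram' _)]
  exact Finset.sup'_const _ _
end
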